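/- Let G be a finite group, N a normal subgroup of G, and p, q primes. If q divides |(G/N)/O_{p',p}(G/N)| then q divides |G/O_{p',p}(G)|. (The Hawkes graph function is Q-closed: Γ_H(G/N) ⊆ Γ_H(G).) -/

import Mathlib

/-!
A surjection `f : G → H` carries `O_{p'}(G)` into `O_{p'}(H)` and `O_p(G)` into `O_p(H)`: the
image of a normal `p'`-subgroup (resp. `p`-subgroup) is again one. Hence `f` induces a
surjection `G / O_{p'}(G) → H / O_{p'}(H)` carrying `O_p` into `O_p`, so `f` maps `O_{p',p}(G)`
into `O_{p',p}(H)`. Taking `f : G → G/N`, the index of `O_{p',p}(G/N)` divides that of the image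
of `O_{p',p}(G)`, which divides that of `O_{p',p}(G)`.
-/

/-- The join of a set of normal subgroups is normal. -/
theorem sSup_normal {G : Type*} [Group G] (S : Set (Subgroup G)) (hS : ∀ N ∈ S, N.Normal) :
    (sSup S).Normal := by
  constructor
  intro n hn g
  rw [sSup_eq_iSup'] at hn ⊢
  refine Subgroup.iSup_induction (C := fun x => g * x * g⁻¹ ∈ ⨆ N : S, (N : Subgroup G))
    _ hn ?_ ?_ ?_
  · intro N x hx
    exact Subgroup.mem_iSup_of_mem N ((hS N N.2).conj_mem x hx g)
  · simpa using Subgroup.one_mem _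
  · intro x y hx hy
    have h : g * (x * y) * g⁻¹ = (g * x * g⁻¹) * (g * y * g⁻¹) := by group
    rw [h]; exact Subgroup.mul_mem _ hx hy

/-- The `p'`-core `O_{p'}(G)`: the largest normal subgroup of `G` of order coprime to `p`,
realized as the join of all normal subgroups of order coprime to `p`. -/
def pPrimeCore (p : ℕ) (G : Type*) [Group G] : Subgroup G :=
  sSup {N : Subgroup G | N.Normal ∧ Nat.Coprime (Nat.card N) p}

instance pPrimeCore_normal (p : ℕ) (G : Type*) [Group G] : (pPrimeCore p G).Normal :=
  sSup_normal _ fun _ hN => hN.1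

/-- The `p`-core `O_p(G)`: the largest normal `p`-subgroup of `G`,
realized as the join of all normal `p`-subgroups. -/
def pCore (p : ℕ) (G : Type*) [Group G] : Subgroup G :=
  sSup {N : Subgroup G | N.Normal ∧ IsPGroup p N}

instance pCore_normal (p : ℕ) (G : Type*) [Group G] : (pCore p G).Normal :=
  sSup_normal _ fun _ hN => hN.1

/-- `O_{p',p}(G)`: the preimage in `G` of `O_p(G / O_{p'}(G))`. -/
def OpPrimeP (p : ℕ) (G : Type*) [Group G] : Subgroup G :=
  (pCore p (G ⧸ pPrimeCore p G)).comap (QuotientGroup.mk' (pPrimeCore p G))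

/-- A Schmidt group: a non-nilpotent group all of whose proper subgroups are nilpotent. -/
def IsSchmidt (G : Type*) [Group G] : Prop :=
  ¬ Group.IsNilpotent G ∧ ∀ H : Subgroup G, H ≠ ⊤ → Group.IsNilpotent H

/-- A Schmidt `(p,q)`-group: a Schmidt group whose order is divisible by exactly the
primes `p` and `q` and whose Sylow `p`-subgroup is normal. -/
def IsSchmidtPQ (p q : ℕ) (G : Type*) [Group G] : Prop :=
  IsSchmidt G ∧ (Nat.card G).primeFactors = {p, q} ∧ ∃ P : Sylow p G, (P : Subgroup G).Normal

open Subgroup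

section

variable {G H : Type*} [Group G] [Group H]

lemma Subgroup.card_sup_dvd_card_mul_card (K N : Subgroup G) [N.Normal] :
    Nat.card ↥(K ⊔ N) ∣ Nat.card K * Nat.card N := by
  rw [← relIndex_bot_left (K ⊔ N), ← relIndex_mul_relIndex _ _ _ bot_le le_sup_right,
    relIndex_bot_left, relIndex_sup_right, mul_comm]
  exact mul_dvd_mul_right (relIndex_dvd_card _ _) _

lemma Subgroup.sSup_induction_of_normal [Finite G] {P : Subgroup G → Prop} (bot : P ⊥)
    (sup : ∀ K N : Subgroup G, N.Normal → P K → P N → P (K ⊔ N))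
    (S : Set (Subgroup G)) (hS : ∀ N ∈ S, N.Normal ∧ P N) : P (sSup S) := by
  induction S, S.toFinite using Set.Finite.induction_on with
  | empty => simpa using bot
  | @insert N S _ _ ih =>
    have hS' : ∀ M ∈ S, M.Normal ∧ P M := fun M hM => hS M (Set.mem_insert_of_mem N hM)
    rw [sSup_insert]
    exact sup _ _ (_root_.sSup_normal S fun M hM => (hS' M hM).1) (hS N (Set.mem_insert N S)).2
      (ih hS')

lemma coprime_card_pPrimeCore [Finite G] (p : ℕ) : (Nat.card (pPrimeCore p G)).Coprime p :=
  sSup_induction_of_normal (P := fun K => (Nat.card K).Coprime p) (by simp)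
    (fun K N _ hK hN => (hK.mul_left hN).coprime_dvd_left (card_sup_dvd_card_mul_card K N)) _
    fun _ hN => hN

lemma isPGroup_pCore [Finite G] (p : ℕ) : IsPGroup p (pCore p G) :=
  sSup_induction_of_normal (P := fun K => IsPGroup p K) IsPGroup.of_bot
    (fun _ _ _ hK hN => hK.to_sup_of_normal_right hN) _ fun _ hN => hN

section Surjective

variable [Finite G] {f : G →* H} (hf : Function.Surjective f) (p : ℕ)
include hf

lemma map_pPrimeCore_le : (pPrimeCore p G).map f ≤ pPrimeCore p H :=
  le_sSup ⟨(pPrimeCore_normal p G).map f hf,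
    (coprime_card_pPrimeCore p).coprime_dvd_left (card_map_dvd _ f)⟩

lemma map_pCore_le : (pCore p G).map f ≤ pCore p H :=
  le_sSup ⟨(pCore_normal p G).map f hf, (isPGroup_pCore p).map f⟩

lemma map_OpPrimeP_le : (OpPrimeP p G).map f ≤ OpPrimeP p H := by
  have hle : pPrimeCore p G ≤ (pPrimeCore p H).comap f :=
    map_le_iff_le_comap.mp (map_pPrimeCore_le hf p)
  have hφ : Function.Surjective (QuotientGroup.map _ _ f hle) :=
    QuotientGroup.map_surjective_of_surjective _ _ _ (QuotientGroup.mk_surjective.comp hf) hle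
  rintro _ ⟨x, hx, rfl⟩
  exact map_pCore_le hφ p ⟨_, hx, rfl⟩

lemma index_OpPrimeP_dvd_of_surjective : (OpPrimeP p H).index ∣ (OpPrimeP p G).index :=
  (index_dvd_of_le (map_OpPrimeP_le hf p)).trans (index_map_dvd _ hf)

end Surjective

end

theorem hawkes_Q_closed_general {G : Type*} [Group G] [Finite G] (N : Subgroup G) [N.Normal] {p q : ℕ}
    (h : q ∣ Nat.card ((G ⧸ N) ⧸ OpPrimeP p (G ⧸ N))) :
    q ∣ Nat.card (G ⧸ OpPrimeP p G) :=
  h.trans (index_OpPrimeP_dvd_of_surjective (QuotientGroup.mk'_surjective N) p)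

/-- The Hawkes graph function is `Q`-closed: for a normal subgroup `N` of `G`, if `q` divides
`|(G/N) / O_{p',p}(G/N)|` then `q` divides `|G / O_{p',p}(G)|`. -/
theorem hawkes_Q_closed {G : Type*} [Group G] [Finite G] (N : Subgroup G) [N.Normal] {p q : ℕ}
    (hp : p.Prime) (hq : q.Prime)
    (h : q ∣ Nat.card ((G ⧸ N) ⧸ OpPrimeP p (G ⧸ N))) :
    q ∣ Nat.card (G ⧸ OpPrimeP p G) :=
  hawkes_Q_closed_general N h
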